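/- For an element x of a nominal set and an atom a, the following are equivalent: (1) a ∉ supp(x); (2) the set {c ∈ 𝔸 : (a c)·x = x} is cofinite in 𝔸 (Pitts' equivalence). -/

import Mathlib

/-- The countably infinite set of atoms. -/
abbrev Atom : Type := ℕ

/-- The domain of a permutation: the atoms it moves. -/
def pdom (π : Equiv.Perm Atom) : Set Atom := {a | π a ≠ a}

/-- The group `Perm(𝔸)` of finite (finitely supported) permutations of atoms. -/
def FinPerm : Subgroup (Equiv.Perm Atom) where
  carrier := {π | (pdom π).Finite}
  one_mem' := by simp [pdom]
  mul_mem' := by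
    intro π σ hπ hσ
    refine (Set.Finite.union hπ hσ).subset ?_
    intro a ha
    by_contra h
    simp only [Set.mem_union, pdom, Set.mem_setOf_eq, not_or, not_not] at h
    exact ha (by simp [pdom, Equiv.Perm.mul_apply, h.1, h.2])
  inv_mem' := by
    intro π hπ
    refine hπ.subset ?_
    intro a ha h
    apply ha
    calc π⁻¹ a = π⁻¹ (π a) := by rw [h]
    _ = a := by simp

/-- `B` supports `x` w.r.t. the action `act`: every finite permutation fixing `B`
pointwise fixes `x`. -/
def NSupports {X : Type*} (act : FinPerm → X → X) (B : Set Atom) (x : X) : Prop :=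
  ∀ π : FinPerm, (∀ a ∈ B, (π : Equiv.Perm Atom) a = a) → act π x = x

/-- `nsupp act x` is the least support of `x`: the intersection of all finite supports. -/
def nsupp {X : Type*} (act : FinPerm → X → X) (x : X) : Set Atom :=
  ⋂₀ {B : Set Atom | B.Finite ∧ NSupports act B x}

/-- `act` makes `X` into a nominal set: a lawful `FinPerm`-action all of whose
elements are finitely supported. -/
def IsNominal {X : Type*} (act : FinPerm → X → X) : Prop :=
  (∀ x, act 1 x = x) ∧ (∀ π σ x, act (π * σ) x = act π (act σ x)) ∧
  (∀ x, ∃ B : Set Atom, B.Finite ∧ NSupports act B x)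

/-- The transposition `(a b)` as a finite permutation. -/
def swapF (a b : Atom) : FinPerm :=
  ⟨Equiv.swap a b, by
    apply Set.Finite.subset ((Set.finite_singleton b).insert a)
    intro x hx
    by_contra h
    simp only [Set.mem_insert_iff, Set.mem_singleton_iff, not_or] at h
    exact hx (Equiv.swap_apply_of_ne_of_ne h.1 h.2)⟩

/-!
A finite support `B` of `x` with `a ∉ B` shows that every swap `(a c)` with `c ∉ B` fixes `x`,
so the atoms `c` with `(a c)·x ≠ x` lie in `B`. Conversely, given any finite support `B` of `x`,
the cofinite set of `c` with `(a c)·x = x` contains some `c ∉ B`;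
then `(a c)·B` is a finite support of `(a c)·x = x` that avoids `a`.
-/

lemma notMem_nsupp_iff {X : Type*} (act : FinPerm → X → X) (x : X) (a : Atom) :
    a ∉ nsupp act x ↔ ∃ B : Set Atom, B.Finite ∧ NSupports act B x ∧ a ∉ B := by
  simp only [nsupp, Set.mem_sInter, not_forall, exists_prop, Set.mem_ofPred_eq, and_assoc]

namespace NSupports

variable {X : Type*} {act : FinPerm → X → X} {B : Set Atom} {x : X}

lemma image (hmul : ∀ π σ x, act (π * σ) x = act π (act σ x)) (hB : NSupports act B x)
    (π : FinPerm) : NSupports act ((π : Equiv.Perm Atom) '' B) (act π x) := by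
  intro σ hσ
  -- the conjugate `π⁻¹ σ π` fixes `B` pointwise
  have hconj : act (π⁻¹ * σ * π) x = x := by
    refine hB _ fun b hb => ?_
    simp [Equiv.Perm.mul_apply, hσ _ ⟨b, hb, rfl⟩]
  calc act σ (act π x) = act (π * (π⁻¹ * σ * π)) x := by rw [← hmul]; group
    _ = act π x := by rw [hmul, hconj]

lemma swapF_eq {a c : Atom} (hB : NSupports act B x) (ha : a ∉ B) (hc : c ∉ B) :
    act (swapF a c) x = x :=
  hB _ fun b hb => Equiv.swap_apply_of_ne_of_ne (ne_of_mem_of_not_mem hb ha)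
    (ne_of_mem_of_not_mem hb hc)

end NSupports

lemma mem_swap_image_left_iff {α : Type*} [DecidableEq α] (a c : α) (s : Set α) :
    a ∈ Equiv.swap a c '' s ↔ c ∈ s := by
  simp [Equiv.image_eq_preimage_symm]

/-- Pitts' equivalence: `a ∉ supp x` iff the set of atoms `c` with
`(a c)·x = x` is cofinite. -/
theorem stmt2 {X : Type*} (act : FinPerm → X → X) (hnom : IsNominal act)
    (x : X) (a : Atom) :
    a ∉ nsupp act x ↔ ({c : Atom | act (swapF a c) x = x}ᶜ).Finite := by
  obtain ⟨-, hmul, hfin⟩ := hnom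
  rw [notMem_nsupp_iff]
  constructor
  · rintro ⟨B, hBfin, hB, haB⟩
    exact hBfin.subset fun c hc => by_contra fun hcB => hc (hB.swapF_eq haB hcB)
  · intro hcofin
    obtain ⟨B, hBfin, hB⟩ := hfin x
    obtain ⟨c, hc⟩ := (hcofin.union hBfin).infinite_compl.nonempty
    simp only [Set.mem_compl_iff, Set.mem_union, Set.mem_ofPred_eq, not_or, not_not] at hc
    obtain ⟨hcx, hcB⟩ := hc
    refine ⟨Equiv.swap a c '' B, hBfin.image _, ?_, (mem_swap_image_left_iff a c B).not.mpr hcB⟩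
    have hsupp := hB.image hmul (swapF a c)
    rwa [hcx] at hsupp
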